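/- For y = [a, b]ᵀ with a, b > 0 and θ ∈ (0, π/2], yᵀ M(θ) y > 0, where M(θ) = (1/2)·[[sin 2θ + 2π − 2θ, −(2π−θ)cos θ − sin θ], [−(2π−θ)cos θ − sin θ, 2π]]. -/

import Mathlib

/-!
The matrix has positive lower-right entry `2π`, so it suffices that its determinant is positive.
Using `sin² θ + cos² θ = 1`, four times the determinant is `((2π - θ) sin θ)² - sin² θ
+ 2θ sin θ cos θ - θ²`, and Jordan's inequality `sin θ ≥ 2θ/π` gives `(2π - θ) sin θ ≥ 3θ`.
-/

open Matrix

lemma dotProduct_mulVec_symm_fin_two {R : Type*} [CommRing R] (a b A B C : R) :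
    ![a, b] ⬝ᵥ (!![A, B; B, C] *ᵥ ![a, b]) = A * a ^ 2 + 2 * B * a * b + C * b ^ 2 := by
  simp only [dotProduct, mulVec, Fin.sum_univ_two, cons_val_zero, cons_val_one,
    of_apply, cons_val', empty_val', cons_val_fin_one]
  ring

lemma quadratic_pos_of_sq_lt_mul {K : Type*} [CommRing K] [LinearOrder K] [IsStrictOrderedRing K]
    {a b A B C : K} (ha : a ≠ 0) (hC : 0 < C)
    (hdisc : B ^ 2 < A * C) : 0 < A * a ^ 2 + 2 * B * a * b + C * b ^ 2 := by
  have key : C * (A * a ^ 2 + 2 * B * a * b + C * b ^ 2) =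
      (B * a + C * b) ^ 2 + (A * C - B ^ 2) * a ^ 2 := by ring
  have hdet : 0 < A * C - B ^ 2 := sub_pos.mpr hdisc
  have hpos : 0 < C * (A * a ^ 2 + 2 * B * a * b + C * b ^ 2) := by
    rw [key]
    positivity
  exact pos_of_mul_pos_right hpos hC.le

lemma three_mul_le_two_pi_sub_mul_sin {θ : ℝ} (h0 : 0 ≤ θ) (h1 : θ ≤ Real.pi / 2) :
    3 * θ ≤ (2 * Real.pi - θ) * Real.sin θ := by
  have jordan : 2 / Real.pi * θ ≤ Real.sin θ := Real.mul_le_sin h0 h1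
  calc 3 * θ = 3 * Real.pi / 2 * (2 / Real.pi * θ) := by field_simp
    _ ≤ (2 * Real.pi - θ) * Real.sin θ :=
      mul_le_mul (by linarith) jordan (by positivity) (by linarith [Real.pi_pos])

lemma sq_two_pi_sub_mul_cos_add_sin_lt {θ : ℝ} (h0 : 0 < θ) (h1 : θ ≤ Real.pi / 2) :
    ((2 * Real.pi - θ) * Real.cos θ + Real.sin θ) ^ 2 <
      2 * Real.pi * (Real.sin (2 * θ) + 2 * Real.pi - 2 * θ) := by
  have hs : 0 < Real.sin θ := Real.sin_pos_of_pos_of_lt_pi h0 (by linarith [Real.pi_pos])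
  have hc : 0 ≤ Real.cos θ := Real.cos_nonneg_of_mem_Icc ⟨by linarith [Real.pi_pos], h1⟩
  have hsθ : Real.sin θ < θ := Real.sin_lt h0
  have hjordan := three_mul_le_two_pi_sub_mul_sin h0.le h1
  have gap : 2 * Real.pi * (Real.sin (2 * θ) + 2 * Real.pi - 2 * θ) -
      ((2 * Real.pi - θ) * Real.cos θ + Real.sin θ) ^ 2 =
      ((2 * Real.pi - θ) * Real.sin θ) ^ 2 - Real.sin θ ^ 2
        + 2 * θ * Real.sin θ * Real.cos θ - θ ^ 2 := by
    rw [Real.sin_two_mul]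
    linear_combination -(2 * Real.pi - θ) ^ 2 * Real.sin_sq_add_cos_sq θ
  nlinarith [mul_nonneg (mul_nonneg h0.le hs.le) hc, mul_self_le_mul_self (by positivity) hjordan,
    mul_self_lt_mul_self hs.le hsθ]

theorem quadratic_form_pos_general (a b θ : ℝ) (ha : 0 < a)
    (h0 : 0 < θ) (h1 : θ ≤ Real.pi / 2) :
    0 < dotProduct ![a, b]
        ((((1 : ℝ) / 2) •
          !![Real.sin (2 * θ) + 2 * Real.pi - 2 * θ,
             -((2 * Real.pi - θ) * Real.cos θ) - Real.sin θ;
             -((2 * Real.pi - θ) * Real.cos θ) - Real.sin θ,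
             2 * Real.pi] : Matrix (Fin 2) (Fin 2) ℝ).mulVec ![a, b]) := by
  rw [smul_mulVec, dotProduct_smul, dotProduct_mulVec_symm_fin_two, smul_eq_mul]
  refine mul_pos one_half_pos (quadratic_pos_of_sq_lt_mul ha.ne' Real.two_pi_pos ?_)
  linarith [sq_two_pi_sub_mul_cos_add_sin_lt h0 h1]

theorem quadratic_form_pos (a b θ : ℝ) (ha : 0 < a) (hb : 0 < b)
    (h0 : 0 < θ) (h1 : θ ≤ Real.pi / 2) :
    0 < dotProduct ![a, b]
        ((((1 : ℝ) / 2) •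
          !![Real.sin (2 * θ) + 2 * Real.pi - 2 * θ,
             -((2 * Real.pi - θ) * Real.cos θ) - Real.sin θ;
             -((2 * Real.pi - θ) * Real.cos θ) - Real.sin θ,
             2 * Real.pi] : Matrix (Fin 2) (Fin 2) ℝ).mulVec ![a, b]) :=
  quadratic_form_pos_general a b θ ha h0 h1
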